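/- arXiv:2101.07901 — 5 statements merged into one kernel-verified Lean document; each statement's English description precedes it below -/
import Mathlib

section
/- Every NCI graph is connected. -/
/-!
If `G` were disconnected, pick a vertex `w` with two distinct neighbours (it exists since `G` is
not a complete intersection) and a vertex `x` outside the component of `w`. Then neither `w` nor
its neighbours are adjacent to `x`, so the inversion at `x` keeps the two edges at `w`, and it is
not a complete intersection.
-/

/-- A graph is a "complete intersection" (CI) iff it is a disjoint union of
edges and singletons, i.e. every vertex has at most one neighbor. -/
def SimpleGraph.IsCIGraph {V : Type*} (G : SimpleGraph V) : Prop :=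
  ∀ v : V, (G.neighborSet v).Subsingleton

/-- The inversion of `G` at a vertex `v`: the graph on `V \ {v}` whose edges are
those of the induced subgraph of `G` on `V \ ({v} ∪ N(v))`. -/
def SimpleGraph.inversion {V : Type*} (G : SimpleGraph V) (v : V) :
    SimpleGraph {u : V // u ≠ v} where
  Adj a b := G.Adj a.1 b.1 ∧ ¬ G.Adj v a.1 ∧ ¬ G.Adj v b.1
  symm := ⟨fun a b h => ⟨h.1.symm, h.2.2, h.2.1⟩⟩
  loopless := ⟨fun a h => G.loopless.irrefl a.1 h.1⟩

/-- A graph is a nearly complete intersection (NCI) iff it is not a CI and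
all of its inversions are CIs. -/
def SimpleGraph.IsNCI {V : Type*} (G : SimpleGraph V) : Prop :=
  ¬ G.IsCIGraph ∧ ∀ v : V, (G.inversion v).IsCIGraph

namespace SimpleGraph

variable {V : Type*} {G : SimpleGraph V}

lemma inversion_adj_of_not_reachable {x : V} {a b : {u : V // u ≠ x}} (hab : G.Adj a b)
    (ha : ¬ G.Reachable x a) : (G.inversion x).Adj a b :=
  ⟨hab, fun hxa => ha hxa.reachable, fun hxb => ha (hxb.reachable.trans hab.symm.reachable)⟩

lemma neighborSet_subsingleton_of_not_reachable {x u : V} (hG : (G.inversion x).IsCIGraph)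
    (hu : ¬ G.Reachable x u) : (G.neighborSet u).Subsingleton := by
  have hux : u ≠ x := fun h => hu (h ▸ Reachable.refl (G := G) x)
  have hne : ∀ {c}, G.Adj u c → c ≠ x := fun hc h => hu (h ▸ hc.reachable.symm)
  rintro a (ha : G.Adj u a) b (hb : G.Adj u b)
  have hab := hG ⟨u, hux⟩
    (inversion_adj_of_not_reachable (b := ⟨a, hne ha⟩) ha hu)
    (inversion_adj_of_not_reachable (b := ⟨b, hne hb⟩) hb hu)
  simpa using hab

end SimpleGraph

/-- Every NCI graph is connected. -/
theorem nci_connected {V : Type*} (G : SimpleGraph V) (h : G.IsNCI) :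
    G.Connected := by
  obtain ⟨hnotCI, hinv⟩ := h
  obtain ⟨w, hw⟩ : ∃ w, ¬ (G.neighborSet w).Subsingleton := by
    simpa [SimpleGraph.IsCIGraph] using hnotCI
  refine (SimpleGraph.connected_iff_exists_forall_reachable G).2 ⟨w, fun x => ?_⟩
  by_contra hwx
  exact hw (SimpleGraph.neighborSet_subsingleton_of_not_reachable (hinv x) (mt .symm hwx))
end

section
/- Every star graph S_n (one center adjacent to n ≥ 2 leaves) is an NCI graph. -/
/-- The star graph: vertex 0 is the center, adjacent to the n leaves. -/
def starGraph (n : ℕ) : SimpleGraph (Fin (n + 1)) where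
  Adj a b := a ≠ b ∧ (a = 0 ∨ b = 0)
  symm := ⟨fun a b h => ⟨h.1.symm, h.2.symm⟩⟩
  loopless := ⟨fun a h => h.1 rfl⟩

/-!
Every edge of a star contains the center, and the center lies in the closed neighbourhood of
every vertex, so every inversion of a star is edgeless. The star itself is not a CI graph
because its center has two distinct neighbours.
-/

namespace SimpleGraph

variable {V : Type*} {G : SimpleGraph V}

theorem isCIGraph_bot : (⊥ : SimpleGraph V).IsCIGraph :=
  fun _ _ ha => ha.elim

theorem not_isCIGraph_of_adj_of_adj {v a b : V} (hab : a ≠ b) (ha : G.Adj v a)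
    (hb : G.Adj v b) : ¬ G.IsCIGraph :=
  fun h => hab (h v ha hb)

theorem inversion_eq_bot_of_isVertexCover {v : V}
    (h : G.IsVertexCover (insert v (G.neighborSet v))) : G.inversion v = ⊥ := by
  ext a b
  simp only [inversion, bot_adj, iff_false, not_and, not_not]
  intro hab hva
  rcases h hab with ha | hb
  · exact (ha.resolve_left a.2 |> hva).elim
  · exact hb.resolve_left b.2

end SimpleGraph

theorem starGraph_adj_zero {n : ℕ} {a : Fin (n + 1)} (ha : a ≠ 0) : (starGraph n).Adj 0 a :=
  ⟨ha.symm, Or.inl rfl⟩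

theorem starGraph_isVertexCover_zero (n : ℕ) : (starGraph n).IsVertexCover {0} :=
  fun _ _ hab => hab.2

theorem zero_mem_insert_neighborSet_starGraph {n : ℕ} (v : Fin (n + 1)) :
    0 ∈ insert v ((starGraph n).neighborSet v) := by
  by_cases hv : v = 0
  · exact Or.inl hv.symm
  · exact Or.inr (starGraph_adj_zero hv).symm

theorem starGraph_not_isCIGraph {n : ℕ} (hn : 2 ≤ n) : ¬ (starGraph n).IsCIGraph :=
  SimpleGraph.not_isCIGraph_of_adj_of_adj (a := ⟨1, by omega⟩) (b := ⟨2, by omega⟩)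
    (by simp [Fin.ext_iff]) (starGraph_adj_zero (by simp [Fin.ext_iff]))
    (starGraph_adj_zero (by simp [Fin.ext_iff]))

theorem starGraph_inversion_eq_bot (n : ℕ) (v : Fin (n + 1)) : (starGraph n).inversion v = ⊥ :=
  SimpleGraph.inversion_eq_bot_of_isVertexCover <| (starGraph_isVertexCover_zero n).subset <|
    Set.singleton_subset_iff.mpr (zero_mem_insert_neighborSet_starGraph v)

/-- Every star graph with at least 2 leaves is an NCI graph. -/
theorem starGraph_isNCI (n : ℕ) (hn : 2 ≤ n) : (starGraph n).IsNCI :=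
  ⟨starGraph_not_isCIGraph hn, fun v => starGraph_inversion_eq_bot n v ▸ SimpleGraph.isCIGraph_bot⟩
end

section
/- Let G be a connected graph with at least 5 vertices. If there exist vertices v_1,...,v_5 of G such that v_1 is a leaf in the induced subgraph H = G[v_1,...,v_5] and P_5 is a spanning tree of H with v_1 an endpoint whose neighbor has degree 2 in the spanning tree, then G is not NCI. -/
/-- The tree `T` on 5 vertices: the path 0 — 1 — 2 together with the
two extra leaves 3 and 4 attached to the vertex 2. -/
def treeT : SimpleGraph (Fin 5) :=
  SimpleGraph.fromRel (fun a b =>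
    (a = 0 ∧ b = 1) ∨ (a = 1 ∧ b = 2) ∨ (a = 2 ∧ b = 3) ∨ (a = 2 ∧ b = 4))

/-!
Since `v₁` has a single neighbour in the induced subgraph on `v₁, …, v₅`, it cannot be an interior
vertex of the spanning path, so it is an end of it, and the three path vertices farthest from `v₁`
form a path `a — b — c` avoiding the neighbourhood of `v₁`. In the inversion at `v₁` the vertex `b`
then keeps both neighbours `a` and `c`, so that inversion is not a disjoint union of edges and
singletons.
-/

namespace SimpleGraph

variable {V : Type*} {G : SimpleGraph V}

theorem not_isCIGraph_inversion {v a b c : V} (hab : G.Adj a b) (hbc : G.Adj b c) (hac : a ≠ c)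
    (ha : ¬G.Adj v a) (hb : ¬G.Adj v b) (hc : ¬G.Adj v c) : ¬(G.inversion v).IsCIGraph := by
  have hav : a ≠ v := fun h => hb (h ▸ hab)
  have hbv : b ≠ v := fun h => hc (h ▸ hbc)
  have hcv : c ≠ v := fun h => hb (h ▸ hbc.symm)
  intro hCI
  have hac' : (⟨a, hav⟩ : {u // u ≠ v}) = ⟨c, hcv⟩ :=
    hCI ⟨b, hbv⟩ ⟨hab.symm, hb, ha⟩ ⟨hbc, hb, hc⟩
  exact hac (congrArg Subtype.val hac')

theorem not_isNCI_of_adj_of_adj {v a b c : V} (hab : G.Adj a b) (hbc : G.Adj b c) (hac : a ≠ c)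
    (ha : ¬G.Adj v a) (hb : ¬G.Adj v b) (hc : ¬G.Adj v c) : ¬G.IsNCI :=
  fun hG => not_isCIGraph_inversion hab hbc hac ha hb hc (hG.2 v)

theorem pathGraph_five_exists_adj_adj_of_subsingleton {i : Fin 5}
    (hi : ∀ j k, (pathGraph 5).Adj i j → (pathGraph 5).Adj i k → j = k) :
    ∃ j a b c, (pathGraph 5).Adj i j ∧ (pathGraph 5).Adj a b ∧ (pathGraph 5).Adj b c ∧
      a ≠ c ∧ j ≠ a ∧ j ≠ b ∧ j ≠ c := by
  revert i
  simp only [pathGraph_adj]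
  decide

theorem Copy.exists_adj_adj_not_adj_of_pathGraph_five (f : (pathGraph 5).Copy G) {i : Fin 5}
    (hi : {j | G.Adj (f i) (f j)}.Subsingleton) :
    ∃ a b c, G.Adj a b ∧ G.Adj b c ∧ a ≠ c ∧
      ¬G.Adj (f i) a ∧ ¬G.Adj (f i) b ∧ ¬G.Adj (f i) c := by
  obtain ⟨j, a, b, c, hij, hab, hbc, hac, hja, hjb, hjc⟩ :=
    pathGraph_five_exists_adj_adj_of_subsingleton fun j k hj hk =>
      hi (f.toHom.map_adj hj) (f.toHom.map_adj hk)
  have hnadj : ∀ k, j ≠ k → ¬G.Adj (f i) (f k) := fun k hjk hk =>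
    hjk (hi (f.toHom.map_adj hij) hk)
  exact ⟨f a, f b, f c, f.toHom.map_adj hab, f.toHom.map_adj hbc, f.injective.ne hac,
    hnadj a hja, hnadj b hjb, hnadj c hjc⟩

end SimpleGraph

/-- If a connected graph G on at least 5 vertices has vertices v₁,…,v₅ such that
v₁ is a leaf in the induced subgraph H = G[v₁,…,v₅] and P₅ is a spanning tree of
H with v₁ an endpoint whose neighbor has degree 2 in the spanning tree, then G
is not NCI. -/
theorem not_nci_of_p5_spanning_tree {V : Type*}
    (G : SimpleGraph V)
    (v₁ v₂ v₃ v₄ v₅ : V)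
    (hleaf : ((G.induce ({v₁, v₂, v₃, v₄, v₅} : Set V)).neighborSet
      ⟨v₁, by simp⟩).ncard = 1)
    (hspan : ∃ T' : SimpleGraph ({v₁, v₂, v₃, v₄, v₅} : Set V),
      T' ≤ G.induce ({v₁, v₂, v₃, v₄, v₅} : Set V) ∧
      Nonempty (T' ≃g SimpleGraph.pathGraph 5) ∧
      ∀ u, T'.Adj ⟨v₁, by simp⟩ u → (T'.neighborSet u).ncard = 2) :
    ¬ G.IsNCI := by
  obtain ⟨T', hle, ⟨e⟩, -⟩ := hspan
  let f : (SimpleGraph.pathGraph 5).Copy G :=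
    (SimpleGraph.Copy.induce G _).comp ((SimpleGraph.Copy.ofLE _ _ hle).comp e.symm.toCopy)
  have hf : f (e ⟨v₁, by simp⟩) = v₁ := by simp [f, SimpleGraph.Copy.induce]
  obtain ⟨w, hw⟩ := Set.ncard_eq_one.mp hleaf
  have hsub : {j | G.Adj (f (e ⟨v₁, by simp⟩)) (f j)}.Subsingleton := by
    refine ((hw ▸ Set.subsingleton_singleton).preimage e.symm.injective).anti fun j hj => ?_
    simpa [f, SimpleGraph.Copy.induce] using hj
  obtain ⟨a, b, c, hab, hbc, hac, ha, hb, hc⟩ := f.exists_adj_adj_not_adj_of_pathGraph_five hsub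
  rw [hf] at ha hb hc
  exact SimpleGraph.not_isNCI_of_adj_of_adj hab hbc hac ha hb hc
end

section
/- Let G be a connected graph with at least 5 vertices. If there exist vertices v_1,...,v_5 such that v_1 is a leaf in H = G[v_1,...,v_5] and the tree T (a path of length 2 from v_1 ending at a vertex with two additional pendant leaves, i.e., the 'chair/spider' tree with degree sequence 1,2,3,1,1) is a spanning tree of H in which the unique neighbor of v_1 has degree 2, then G is not NCI. -/
/-! Since `v₁` is a leaf of `G[v₁,…,v₅]` and its neighbour there has degree 2 in `T`, that
neighbour is the middle vertex of the path, so `v₁` is adjacent in `G` to neither the branch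
vertex of `T` nor its two pendant leaves. In the inversion of `G` at `v₁` the branch vertex
therefore keeps both leaves as neighbours, so that inversion is not a disjoint union of edges
and singletons. -/

instance : DecidableRel treeT.Adj := fun a b =>
  decidable_of_iff _ (SimpleGraph.fromRel_adj _ a b).symm

namespace SimpleGraph

variable {V W : Type*} {G : SimpleGraph V} {G' : SimpleGraph W}

theorem Iso.ncard_neighborSet (φ : G ≃g G') (v : V) :
    (G'.neighborSet (φ v)).ncard = (G.neighborSet v).ncard := by
  rw [← φ.image_neighborSet, Set.ncard_image_of_injective _ φ.injective]

theorem not_isCIGraph_inversion_of_adj_adj {v c d e : V} (hcd : G.Adj c d) (hce : G.Adj c e)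
    (hde : d ≠ e) (hvc : ¬ G.Adj v c) (hvd : ¬ G.Adj v d) (hve : ¬ G.Adj v e) :
    ¬ (G.inversion v).IsCIGraph := by
  have hc : c ≠ v := by rintro rfl; exact hvd hcd
  have hd : d ≠ v := by rintro rfl; exact hvc hcd.symm
  have he : e ≠ v := by rintro rfl; exact hvc hce.symm
  intro hCI
  have := hCI ⟨c, hc⟩ (show (G.inversion v).Adj ⟨c, hc⟩ ⟨d, hd⟩ from ⟨hcd, hvc, hvd⟩)
    (show (G.inversion v).Adj ⟨c, hc⟩ ⟨e, he⟩ from ⟨hce, hvc, hve⟩)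
  exact hde (congrArg Subtype.val this)

end SimpleGraph

theorem treeT_exists_adj (x : Fin 5) : ∃ y, treeT.Adj x y := by
  revert x; decide

theorem treeT_eq_one_of_ncard_neighborSet_eq_two {x : Fin 5}
    (hx : (treeT.neighborSet x).ncard = 2) : x = 1 := by
  rw [Set.ncard_eq_toFinset_card', ← SimpleGraph.neighborFinset_def] at hx
  revert x hx; decide

theorem exists_claw_of_iso_treeT {W : Type*} {T : SimpleGraph W} (φ : T ≃g treeT) (w : W)
    (hw : ∀ u, T.Adj w u → (T.neighborSet u).ncard = 2) :
    ∃ b c d e, T.Adj w b ∧ T.Adj c d ∧ T.Adj c e ∧ d ≠ e ∧ b ≠ c ∧ b ≠ d ∧ b ≠ e := by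
  obtain ⟨y, hy⟩ := treeT_exists_adj (φ w)
  have hwb : T.Adj w (φ.symm y) := by simpa using φ.symm.map_rel_iff.mpr hy
  have hb : φ (φ.symm y) = 1 :=
    treeT_eq_one_of_ncard_neighborSet_eq_two <| (φ.ncard_neighborSet _).trans (hw _ hwb)
  refine ⟨φ.symm y, φ.symm 2, φ.symm 3, φ.symm 4, hwb, ?_, ?_, ?_, ?_, ?_, ?_⟩
  · exact φ.symm.map_rel_iff.mpr (by decide)
  · exact φ.symm.map_rel_iff.mpr (by decide)
  all_goals
    intro h
    have := congrArg φ h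
    simp [hb] at this

/-- If a connected graph G on at least 5 vertices has vertices v₁,…,v₅ such that
v₁ is a leaf in the induced subgraph H = G[v₁,…,v₅] and the tree T is a spanning
tree of H in which the unique neighbor of v₁ has degree 2, then G is not NCI. -/
theorem not_nci_of_treeT_spanning_tree {V : Type*}
    (G : SimpleGraph V)
    (v₁ v₂ v₃ v₄ v₅ : V)
    (hleaf : ((G.induce ({v₁, v₂, v₃, v₄, v₅} : Set V)).neighborSet
      ⟨v₁, by simp⟩).ncard = 1)
    (hspan : ∃ T' : SimpleGraph ({v₁, v₂, v₃, v₄, v₅} : Set V),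
      T' ≤ G.induce ({v₁, v₂, v₃, v₄, v₅} : Set V) ∧
      Nonempty (T' ≃g treeT) ∧
      ∀ u, T'.Adj ⟨v₁, by simp⟩ u → (T'.neighborSet u).ncard = 2) :
    ¬ G.IsNCI := by
  obtain ⟨T', hle, ⟨φ⟩, hdeg⟩ := hspan
  obtain ⟨b, c, d, e, hwb, hcd, hce, hde, hbc, hbd, hbe⟩ := exists_claw_of_iso_treeT φ _ hdeg
  obtain ⟨a, ha⟩ := Set.ncard_eq_one.mp hleaf
  have hnadj : ∀ x, x ≠ b → ¬ G.Adj v₁ x := by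
    have hb : b ∈ (G.induce _).neighborSet _ := hle hwb
    intro x hxb hx
    have hx : x ∈ (G.induce _).neighborSet ⟨v₁, by simp⟩ := hx
    rw [ha, Set.mem_singleton_iff] at hb hx
    exact hxb (hx.trans hb.symm)
  exact fun hNCI => SimpleGraph.not_isCIGraph_inversion_of_adj_adj (G := G) (hle hcd) (hle hce)
    (Subtype.val_injective.ne hde) (hnadj c hbc.symm) (hnadj d hbd.symm) (hnadj e hbe.symm)
    (hNCI.2 v₁)
end

section
/- Let G be a connected graph with at least 5 vertices. G is not NCI if and only if there exist vertices v_1, v_2, v_3, v_4, v_5 of G such that v_1 is a leaf in the induced subgraph H = G[v_1,...,v_5], and either P_5 or the tree T is a spanning tree of H in which every neighbor of v_1 has degree 2. -/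
/-!
For a connected graph on at least three vertices, `G` itself is never a disjoint union of edges
and singletons, so `G` fails to be NCI exactly when some inversion `G.inversion v` contains a
cherry, i.e. a path `b — a — c` with centre `a`; in `G` this is a far cherry: one none of whose
vertices is adjacent to `v`.

Given such a far cherry, walk from its centre `a` back towards `v` along a shortest path: while
`dist v a ≥ 4`, the predecessor `x` of `a` is the centre of the far cherry formed by `a` and the
predecessor of `x`. At distance 2, `v — x — a` together with `b, c` spans a copy of `T`; at
distance 3, `v — y — x — a — b` (choosing `b ≠ x`) spans a copy of `P₅`. In both, `v` sees only
its tree neighbour, every other vertex being at distance at least 2 from it.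

Conversely, removing from `P₅` or `T` a leaf and its neighbour of degree 2 leaves a cherry, which
is far from `v₁` because `v₁` is a leaf of `H`.
-/

namespace SimpleGraph

variable {V W : Type*} {G : SimpleGraph V}

lemma Iso.ncard_neighborSet_s19 {H : SimpleGraph W} (e : G ≃g H) (v : V) :
    (H.neighborSet (e v)).ncard = (G.neighborSet v).ncard := by
  rw [← e.image_neighborSet, Set.ncard_image_of_injective _ e.injective]

lemma ncard_neighborSet_eq_degree [Fintype V] [DecidableRel G.Adj] (v : V) :
    (G.neighborSet v).ncard = G.degree v := by
  rw [Set.ncard_eq_toFinset_card']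
  rfl

def IsCherry (G : SimpleGraph V) (a b c : V) : Prop :=
  G.Adj a b ∧ G.Adj a c ∧ b ≠ c

def IsFarCherry (G : SimpleGraph V) (v a b c : V) : Prop :=
  G.IsCherry a b c ∧ ¬G.Adj v a ∧ ¬G.Adj v b ∧ ¬G.Adj v c

lemma IsCherry.map {H : SimpleGraph W} (f : Copy G H) {a b c : V} (h : G.IsCherry a b c) :
    H.IsCherry (f a) (f b) (f c) :=
  ⟨f.toHom.map_adj h.1, f.toHom.map_adj h.2.1, f.injective.ne h.2.2⟩

lemma not_isCIGraph_iff : ¬G.IsCIGraph ↔ ∃ a b c, G.IsCherry a b c := by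
  simp [IsCIGraph, Set.Subsingleton, IsCherry]

lemma IsCIGraph.eq_or_adj_of_walk (hG : G.IsCIGraph) {u w : V} :
    G.Walk u w → u = w ∨ G.Adj u w
  | .nil => .inl rfl
  | .cons hu p => by
    rcases hG.eq_or_adj_of_walk p with rfl | hw
    · exact .inr hu
    · exact .inl (hG _ hu.symm hw)

lemma Connected.not_isCIGraph [Fintype V] (hG : G.Connected) (hV : 3 ≤ Fintype.card V) :
    ¬G.IsCIGraph := by
  intro hCI
  obtain ⟨f⟩ : Nonempty (Fin 3 ↪ V) := Function.Embedding.nonempty_of_card_le (by simpa using hV)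
  have adj_of_ne {i : Fin 3} (hi : i ≠ 0) : G.Adj (f 0) (f i) :=
    (hCI.eq_or_adj_of_walk (hG.preconnected _ _).some).resolve_left (f.injective.ne hi.symm)
  exact f.injective.ne (by decide : (1 : Fin 3) ≠ 2)
    (hCI _ (adj_of_ne (by decide)) (adj_of_ne (by decide)))

lemma not_isCIGraph_inversion_iff {v : V} :
    ¬(G.inversion v).IsCIGraph ↔ ∃ a b c, G.IsFarCherry v a b c := by
  rw [not_isCIGraph_iff]
  constructor
  · rintro ⟨a, b, c, ⟨hab, hva, hvb⟩, ⟨hac, -, hvc⟩, hbc⟩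
    exact ⟨a, b, c, ⟨hab, hac, fun h => hbc (Subtype.ext h)⟩, hva, hvb, hvc⟩
  · rintro ⟨a, b, c, ⟨hab, hac, hbc⟩, hva, hvb, hvc⟩
    exact ⟨⟨a, G.ne_of_adj_of_not_adj hab hvb⟩, ⟨b, G.ne_of_adj_of_not_adj hab.symm hva⟩,
      ⟨c, G.ne_of_adj_of_not_adj hac.symm hva⟩, ⟨hab, hva, hvb⟩, ⟨hac, hva, hvc⟩,
      fun h => hbc (congrArg Subtype.val h)⟩

lemma Connected.not_isNCI_iff [Fintype V] (hG : G.Connected) (hV : 3 ≤ Fintype.card V) :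
    ¬G.IsNCI ↔ ∃ v a b c, G.IsFarCherry v a b c := by
  simp only [IsNCI, hG.not_isCIGraph hV, not_false_eq_true, true_and, not_forall,
    not_isCIGraph_inversion_iff]

lemma exists_adj_dist_add_one {u v : V} (h : G.dist u v ≠ 0) :
    ∃ w, G.Adj w v ∧ G.dist u w + 1 = G.dist u v := by
  obtain ⟨p, hp⟩ := exists_walk_of_dist_ne_zero h
  obtain ⟨w, hwv, q, hq⟩ :=
    p.reverse.exists_eq_cons_of_ne (dist_ne_zero_iff_ne_and_reachable.mp h).1.symm
  have hlen : q.length + 1 = G.dist u v := by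
    rw [← hp, ← p.length_reverse, hq, Walk.length_cons]
  have hle : G.dist u w ≤ q.length := dist_comm.trans_le (dist_le q)
  refine ⟨w, hwv.symm, ?_⟩
  rcases hwv.symm.diff_dist_adj (u := u) with h | h | h <;> omega

lemma not_adj_of_two_le_dist {u v : V} (h : 2 ≤ G.dist u v) : ¬G.Adj u v := fun huv => by
  rw [dist_eq_one_iff_adj.mpr huv] at h
  omega

lemma IsFarCherry.two_le_dist (hG : G.Connected) {v a b c : V} (h : G.IsFarCherry v a b c) :
    2 ≤ G.dist v a :=
  hG.one_lt_dist_of_ne_of_not_adj (G.ne_of_adj_of_not_adj h.1.1 h.2.2.1).symm h.2.1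

lemma IsFarCherry.exists_dist_le_three {v a b c : V}
    (h : G.IsFarCherry v a b c) : ∃ a b c, G.IsFarCherry v a b c ∧ G.dist v a ≤ 3 := by
  induction hd : G.dist v a using Nat.strong_induction_on generalizing a b c with
  | _ d ih =>
    by_cases hd3 : d ≤ 3
    · exact ⟨a, b, c, h, hd ▸ hd3⟩
    obtain ⟨x, hxa, hx⟩ := exists_adj_dist_add_one (show G.dist v a ≠ 0 by omega)
    obtain ⟨y, hyx, hy⟩ := exists_adj_dist_add_one (show G.dist v x ≠ 0 by omega)
    refine ih _ (by omega) (b := a) (c := y) ⟨⟨hxa, hyx.symm, ?_⟩, ?_, h.2.1, ?_⟩ rfl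
    · rintro rfl; omega
    · exact not_adj_of_two_le_dist (by omega)
    · exact not_adj_of_two_le_dist (by omega)

instance (n : ℕ) : DecidableRel (pathGraph n).Adj :=
  fun _ _ => decidable_of_iff _ pathGraph_adj.symm

instance : DecidableRel treeT.Adj :=
  fun a b => decidable_of_iff _ (fromRel_adj _ a b).symm

lemma pathGraph_le_comap {n : ℕ} {w : Fin (n + 1) → V}
    (h : ∀ i : Fin n, G.Adj (w i.castSucc) (w i.succ)) : pathGraph (n + 1) ≤ G.comap w := by
  intro i j hij
  rcases pathGraph_adj.mp hij with hij | hij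
  · obtain ⟨k, rfl, rfl⟩ : ∃ k : Fin n, k.castSucc = i ∧ k.succ = j :=
      ⟨⟨i, by omega⟩, rfl, Fin.ext (by simp [hij])⟩
    exact h k
  · obtain ⟨k, rfl, rfl⟩ : ∃ k : Fin n, k.castSucc = j ∧ k.succ = i :=
      ⟨⟨j, by omega⟩, rfl, Fin.ext (by simp [hij])⟩
    exact (h k).symm

lemma treeT_le_comap {w : Fin 5 → V} (h01 : G.Adj (w 0) (w 1)) (h12 : G.Adj (w 1) (w 2))
    (h23 : G.Adj (w 2) (w 3)) (h24 : G.Adj (w 2) (w 4)) : treeT ≤ G.comap w := by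
  rintro i j ⟨-, (⟨rfl, rfl⟩ | ⟨rfl, rfl⟩ | ⟨rfl, rfl⟩ | ⟨rfl, rfl⟩) |
    (⟨rfl, rfl⟩ | ⟨rfl, rfl⟩ | ⟨rfl, rfl⟩ | ⟨rfl, rfl⟩)⟩
  exacts [h01, h12, h23, h24, h01.symm, h12.symm, h23.symm, h24.symm]

def HasLeafFiveTree (G : SimpleGraph V) : Prop :=
  ∃ v₁ v₂ v₃ v₄ v₅ : V, List.Nodup [v₁, v₂, v₃, v₄, v₅] ∧
    ((G.induce ({v₁, v₂, v₃, v₄, v₅} : Set V)).neighborSet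
      ⟨v₁, by simp⟩).ncard = 1 ∧
    ∃ T' : SimpleGraph ({v₁, v₂, v₃, v₄, v₅} : Set V),
      T' ≤ G.induce ({v₁, v₂, v₃, v₄, v₅} : Set V) ∧
      (Nonempty (T' ≃g SimpleGraph.pathGraph 5) ∨ Nonempty (T' ≃g treeT)) ∧
      ∀ u, T'.Adj ⟨v₁, by simp⟩ u → (T'.neighborSet u).ncard = 2

lemma hasLeafFiveTree_of_le_comap {F : SimpleGraph (Fin 5)} [DecidableRel F.Adj]
    (hF : Nonempty (F ≃g pathGraph 5) ∨ Nonempty (F ≃g treeT))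
    (hF0 : ∀ j, F.Adj 0 j → F.degree j = 2) {f : Fin 5 → V} (hf : Function.Injective f)
    (hFG : F ≤ G.comap f) (hleaf : ∀ i, G.Adj (f 0) (f i) ↔ i = 1) : G.HasLeafFiveTree := by
  set S : Set V := {f 0, f 1, f 2, f 3, f 4}
  have hmem (i : Fin 5) : f i ∈ S := by fin_cases i <;> simp [S]
  have hψ : Function.Bijective fun i => (⟨f i, hmem i⟩ : S) := by
    refine ⟨fun i j hij => hf (congrArg Subtype.val hij), ?_⟩
    rintro ⟨x, hx⟩
    simp only [S, Set.mem_insert_iff, Set.mem_singleton_iff] at hx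
    rcases hx with rfl | rfl | rfl | rfl | rfl
    exacts [⟨0, rfl⟩, ⟨1, rfl⟩, ⟨2, rfl⟩, ⟨3, rfl⟩, ⟨4, rfl⟩]
  set ψ : Fin 5 ≃ S := .ofBijective _ hψ
  let e : F ≃g F.map ψ.toEmbedding := .map ψ F
  refine ⟨f 0, f 1, f 2, f 3, f 4, ?_, ?_, F.map ψ.toEmbedding, ?_, ?_, ?_⟩
  · simpa [List.ofFn_succ] using List.nodup_ofFn.mpr hf
  · have : (G.induce S).neighborSet (ψ 0) = {ψ 1} := by
      ext u
      obtain ⟨i, rfl⟩ := ψ.surjective u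
      exact (hleaf i).trans ψ.injective.eq_iff.symm
    rw [← Set.ncard_singleton (ψ 1), ← this]
    rfl
  · rintro _ _ ⟨-, i, j, hij, rfl, rfl⟩
    exact hFG hij
  · exact hF.imp (fun ⟨g⟩ => ⟨e.symm.trans g⟩) (fun ⟨g⟩ => ⟨e.symm.trans g⟩)
  · intro u hu
    obtain ⟨j, rfl⟩ := ψ.surjective u
    rw [show ψ j = e j from rfl, e.ncard_neighborSet_s19, ncard_neighborSet_eq_degree]
    exact hF0 j (e.map_adj_iff.mp hu)

lemma IsFarCherry.hasLeafFiveTree_of_dist_eq_two {v a b c : V} (h : G.IsFarCherry v a b c)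
    (hd : G.dist v a = 2) : G.HasLeafFiveTree := by
  obtain ⟨⟨hab, hac, hbc⟩, hva, hvb, hvc⟩ := h
  obtain ⟨x, hxa, hx⟩ := exists_adj_dist_add_one (show G.dist v a ≠ 0 by omega)
  have hvx : G.Adj v x := dist_eq_one_iff_adj.mp (by omega)
  have hw : Function.Injective ![v, x, a, b, c] := by
    intro i j hij
    fin_cases i <;> fin_cases j <;> simp_all [adj_comm]
  refine hasLeafFiveTree_of_le_comap (Or.inr ⟨.refl⟩) (by decide) hw
    (treeT_le_comap hvx hxa hab hac) fun i => ?_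
  fin_cases i <;> simp [hvx, hva, hvb, hvc]

lemma IsFarCherry.hasLeafFiveTree_of_dist_eq_three {v a b c : V} (h : G.IsFarCherry v a b c)
    (hd : G.dist v a = 3) : G.HasLeafFiveTree := by
  obtain ⟨⟨hab, hac, hbc⟩, hva, hvb, hvc⟩ := h
  obtain ⟨x, hxa, hx⟩ := exists_adj_dist_add_one (show G.dist v a ≠ 0 by omega)
  obtain ⟨y, hyx, hy⟩ := exists_adj_dist_add_one (show G.dist v x ≠ 0 by omega)
  have hvy : G.Adj v y := dist_eq_one_iff_adj.mp (by omega)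
  have hvx : ¬G.Adj v x := not_adj_of_two_le_dist (by omega)
  obtain ⟨d, had, hvd, hdx⟩ : ∃ d, G.Adj a d ∧ ¬G.Adj v d ∧ d ≠ x := by
    by_cases hbx : b = x
    exacts [⟨c, hac, hvc, hbx ▸ hbc.symm⟩, ⟨b, hab, hvb, hbx⟩]
  have hw : Function.Injective ![v, y, x, a, d] := by
    intro i j hij
    fin_cases i <;> fin_cases j <;> simp_all [adj_comm]
  refine hasLeafFiveTree_of_le_comap (Or.inl ⟨.refl⟩) (by decide) hw
    (pathGraph_le_comap fun i => ?_) fun i => ?_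
  · fin_cases i
    exacts [hvy, hyx, hxa, had]
  · fin_cases i <;> simp [hvy, hvx, hva, hvd]

lemma Connected.hasLeafFiveTree_of_isFarCherry (hG : G.Connected) {v a b c : V}
    (h : G.IsFarCherry v a b c) : G.HasLeafFiveTree := by
  obtain ⟨a, b, c, h, hd⟩ := h.exists_dist_le_three
  have h2 := h.two_le_dist hG
  obtain hd | hd : G.dist v a = 2 ∨ G.dist v a = 3 := by omega
  exacts [h.hasLeafFiveTree_of_dist_eq_two hd, h.hasLeafFiveTree_of_dist_eq_three hd]

def CherryAvoidsLeafNeighbors (G : SimpleGraph V) : Prop :=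
  ∀ i j, G.neighborSet i ⊆ {j} → (∀ k ∈ G.neighborSet i, (G.neighborSet k).ncard = 2) →
    ∃ a b c, G.IsCherry a b c ∧ a ≠ j ∧ b ≠ j ∧ c ≠ j

lemma CherryAvoidsLeafNeighbors.of_iso {H : SimpleGraph W} (e : G ≃g H)
    (hH : H.CherryAvoidsLeafNeighbors) : G.CherryAvoidsLeafNeighbors := by
  intro i j hi hdeg
  have hi' : H.neighborSet (e i) ⊆ {e j} := by
    simpa [← e.image_neighborSet] using Set.image_mono (f := e) hi
  have hdeg' : ∀ k ∈ H.neighborSet (e i), (H.neighborSet k).ncard = 2 := by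
    rw [← e.image_neighborSet]
    rintro _ ⟨k, hk, rfl⟩
    rw [e.ncard_neighborSet_s19]
    exact hdeg k hk
  obtain ⟨a, b, c, habc, ha, hb, hc⟩ := hH (e i) (e j) hi' hdeg'
  refine ⟨e.symm a, e.symm b, e.symm c, by simpa using habc.map e.symm.toCopy, ?_, ?_, ?_⟩ <;>
    rwa [Ne, e.symm_apply_eq]

lemma cherryAvoidsLeafNeighbors_of_degree [Fintype V] [DecidableRel G.Adj]
    (h : ∀ i j, (∀ k, G.Adj i k → k = j) → (∀ k, G.Adj i k → G.degree k = 2) →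
      ∃ a b c, G.Adj a b ∧ G.Adj a c ∧ b ≠ c ∧ a ≠ j ∧ b ≠ j ∧ c ≠ j) :
    G.CherryAvoidsLeafNeighbors := fun i j hi hdeg => by
  obtain ⟨a, b, c, hab, hac, hbc, h⟩ :=
    h i j hi fun k hk => ncard_neighborSet_eq_degree (G := G) k ▸ hdeg k hk
  exact ⟨a, b, c, ⟨hab, hac, hbc⟩, h⟩

lemma pathGraph_cherryAvoidsLeafNeighbors : (pathGraph 5).CherryAvoidsLeafNeighbors :=
  cherryAvoidsLeafNeighbors_of_degree (by decide)

lemma treeT_cherryAvoidsLeafNeighbors : treeT.CherryAvoidsLeafNeighbors :=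
  cherryAvoidsLeafNeighbors_of_degree (by decide)

lemma HasLeafFiveTree.exists_isFarCherry (h : G.HasLeafFiveTree) :
    ∃ v a b c, G.IsFarCherry v a b c := by
  obtain ⟨v₁, v₂, v₃, v₄, v₅, -, hleaf, T', hle, hiso, hdeg⟩ := h
  obtain ⟨u, hu⟩ := Set.ncard_eq_one.mp hleaf
  have hT' : T'.CherryAvoidsLeafNeighbors := by
    rcases hiso with ⟨⟨e⟩⟩ | ⟨⟨e⟩⟩
    exacts [pathGraph_cherryAvoidsLeafNeighbors.of_iso e, treeT_cherryAvoidsLeafNeighbors.of_iso e]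
  obtain ⟨a, b, c, habc, ha, hb, hc⟩ := hT' _ u (hu ▸ fun _ hk => hle hk) hdeg
  have hfar {z : ({v₁, v₂, v₃, v₄, v₅} : Set V)} (hz : z ≠ u) : ¬G.Adj v₁ z :=
    fun hadj => hz (hu.subset hadj)
  exact ⟨v₁, a, b, c, habc.map ((Copy.induce G _).comp (Copy.ofLE _ _ hle)), hfar ha, hfar hb,
    hfar hc⟩

end SimpleGraph

/-- A connected graph G on at least 5 vertices is not NCI iff there are vertices
v₁,…,v₅ such that v₁ is a leaf in the induced subgraph H = G[v₁,…,v₅] and either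
P₅ or the tree T is a spanning tree of H in which every neighbor of v₁ has
degree 2. -/
theorem not_nci_iff {V : Type*} [Fintype V]
    (G : SimpleGraph V) (hconn : G.Connected) (hcard : 5 ≤ Fintype.card V) :
    ¬ G.IsNCI ↔
      ∃ v₁ v₂ v₃ v₄ v₅ : V, List.Nodup [v₁, v₂, v₃, v₄, v₅] ∧
        ((G.induce ({v₁, v₂, v₃, v₄, v₅} : Set V)).neighborSet
          ⟨v₁, by simp⟩).ncard = 1 ∧
        ∃ T' : SimpleGraph ({v₁, v₂, v₃, v₄, v₅} : Set V),
          T' ≤ G.induce ({v₁, v₂, v₃, v₄, v₅} : Set V) ∧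
          (Nonempty (T' ≃g SimpleGraph.pathGraph 5) ∨ Nonempty (T' ≃g treeT)) ∧
          ∀ u, T'.Adj ⟨v₁, by simp⟩ u → (T'.neighborSet u).ncard = 2 := by
  rw [hconn.not_isNCI_iff (by omega)]
  exact ⟨fun ⟨_, _, _, _, h⟩ => hconn.hasLeafFiveTree_of_isFarCherry h,
    SimpleGraph.HasLeafFiveTree.exists_isFarCherry⟩
end
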